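/- arXiv:cs/0305006 — 6 statements merged into one kernel-verified Lean document; each statement's English description precedes it below -/
import Mathlib

section
/- For every integer k ≥ 2, letting n = 2^k and m = 3·2^{k−2}, there exists a shuffle-preserved edge coloring of the complete bipartite graph K_{n,n} (each edge receiving exactly one color) that is m-local (every vertex sees at most m distinct colors on its incident edges) and contains no monochromatic copy of K_{2,2}. -/
/-!
Unfolding the recursion `M_{ℓ+1} = [M_ℓ, μ_ℓ + M_ℓ; 2μ_ℓ + M_ℓ, 3μ_ℓ + M_ℓ]`, the matrix `M_{j+2}`
colours the edge between `(a, x)` and `(b, y)` of `(Fin (2^j) × Fin 4)²` by the triple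
`(a, b, M_2 x y)`, up to renaming colours. Every colour class of `M_2` lies in a single row or
column, and since the blocks `a` and `b` are part of the colour, the same holds for `M_{j+2}`.
Hence no two independent edges share a colour: the colouring is shuffle-preserved vacuously and has
no monochromatic `K_{2,2}`. A vertex `(a, x)` sees at most `2^j` blocks `b` times the `3` colours
of row `x` of `M_2`, so the colouring is `3·2^j`-local.
-/

open Finset

theorem card_image_univ_prod_le {κ β γ δ : Type*} [Fintype κ] [Fintype β] [DecidableEq γ]
    [DecidableEq δ] (F : κ → γ → δ) (h : β → γ) :
    #(univ.image fun q : κ × β => F q.1 (h q.2)) ≤ Fintype.card κ * #(univ.image h) := by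
  calc #(univ.image fun q : κ × β => F q.1 (h q.2))
      ≤ #((univ ×ˢ univ.image h).image fun p : κ × γ => F p.1 p.2) := by
        refine card_le_card fun d hd => ?_
        obtain ⟨⟨j, b⟩, -, rfl⟩ := mem_image.mp hd
        exact mem_image.mpr
          ⟨(j, h b), mem_product.mpr ⟨mem_univ j, mem_image_of_mem h (mem_univ b)⟩, rfl⟩
    _ ≤ Fintype.card κ * #(univ.image h) := card_image_le.trans (card_product _ _).le

def blowUp {ι κ α β γ : Type*} (c : α → β → γ) (p : ι × α) (q : κ × β) : ι × κ × γ :=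
  (p.1, q.1, c p.2 q.2)

section Coloring

variable {α β γ : Type*} [Fintype α] [Fintype β] [DecidableEq γ]

structure IsLocalStarColoring (f : α → β → γ) (r s : ℕ) : Prop where
  eq_or_eq_of_color_eq : ∀ u u' v v', f u v = f u' v' → u = u' ∨ v = v'
  card_row_le : ∀ u, #(univ.image (f u)) ≤ r
  card_col_le : ∀ v, #(univ.image fun u => f u v) ≤ s

theorem IsLocalStarColoring.reindex {α' β' δ : Type*} [Fintype α'] [Fintype β'] [DecidableEq δ]
    {f : α → β → γ} {r s : ℕ} (hf : IsLocalStarColoring f r s) (σ : α' ≃ α) (τ : β' ≃ β)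
    {e : γ → δ} (he : Function.Injective e) :
    IsLocalStarColoring (fun u v => e (f (σ u) (τ v))) r s where
  eq_or_eq_of_color_eq u u' v v' h :=
    (hf.eq_or_eq_of_color_eq _ _ _ _ (he h)).imp σ.injective.eq_iff.mp τ.injective.eq_iff.mp
  card_row_le u := by
    classical
    have : univ.image (fun v => e (f (σ u) (τ v))) = (univ.image (f (σ u))).image e := by
      rw [image_image, ← image_univ_equiv τ, image_image]; rfl
    exact this ▸ card_image_le.trans (hf.card_row_le _)
  card_col_le v := by
    classical
    have : univ.image (fun u => e (f (σ u) (τ v))) = (univ.image (f · (τ v))).image e := by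
      rw [image_image, ← image_univ_equiv σ, image_image]; rfl
    exact this ▸ card_image_le.trans (hf.card_col_le _)

theorem IsLocalStarColoring.blowUp {ι κ : Type*} [Fintype ι] [Fintype κ] [DecidableEq ι]
    [DecidableEq κ] {c : α → β → γ} {r s : ℕ} (hc : IsLocalStarColoring c r s) :
    IsLocalStarColoring (blowUp (ι := ι) (κ := κ) c) (Fintype.card κ * r)
      (Fintype.card ι * s) where
  eq_or_eq_of_color_eq := by
    rintro ⟨i, a⟩ ⟨i', a'⟩ ⟨j, b⟩ ⟨j', b'⟩ h
    simp only [_root_.blowUp, Prod.mk.injEq] at h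
    obtain ⟨rfl, rfl, h⟩ := h
    simpa using hc.eq_or_eq_of_color_eq a a' b b' h
  card_row_le p := (card_image_univ_prod_le (fun j x => (p.1, j, x)) (c p.2)).trans
    (Nat.mul_le_mul_left _ (hc.card_row_le p.2))
  card_col_le q := (card_image_univ_prod_le (fun i x => (i, q.1, x)) (c · q.2)).trans
    (Nat.mul_le_mul_left _ (hc.card_col_le q.2))

end Coloring

/-- The matrix `M_2`. -/
def baseColoring : Fin 4 → Fin 4 → Fin 8 :=
  ![![0, 0, 6, 7], ![4, 5, 1, 1], ![2, 2, 6, 7], ![4, 5, 3, 3]]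

theorem baseColoring_isLocalStarColoring : IsLocalStarColoring baseColoring 3 3 :=
  ⟨by decide, by decide, by decide⟩

theorem exists_isLocalStarColoring (j : ℕ) :
    ∃ f : Fin (2 ^ (j + 2)) → Fin (2 ^ (j + 2)) → ℕ,
      IsLocalStarColoring f (3 * 2 ^ j) (3 * 2 ^ j) := by
  have e : Fin (2 ^ (j + 2)) ≃ Fin (2 ^ j) × Fin 4 :=
    (finCongr (by rw [pow_add]; rfl)).trans finProdFinEquiv.symm
  have h := baseColoring_isLocalStarColoring.blowUp (ι := Fin (2 ^ j)) (κ := Fin (2 ^ j))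
  simp only [Fintype.card_fin, mul_comm (2 ^ j)] at h
  exact ⟨_, h.reindex e e Encodable.encode_injective⟩

/-- For n = 2^k and m = 3·2^(k-2), there is a shuffle-preserved m-local
edge coloring of K_{n,n} with no monochromatic K_{2,2}. -/
theorem exists_mlocal_coloring_no_mono_K22
    (k : ℕ) (hk : 2 ≤ k) :
    ∃ f : Fin (2 ^ k) → Fin (2 ^ k) → ℕ,
      (∀ u u' v v', u ≠ u' → v ≠ v' → f u v = f u' v' →
        f u v' = f u v ∧ f u' v = f u v) ∧
      (∀ u, (Finset.univ.image (fun v => f u v)).card ≤ 3 * 2 ^ (k - 2)) ∧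
      (∀ v, (Finset.univ.image (fun u => f u v)).card ≤ 3 * 2 ^ (k - 2)) ∧
      ¬ ∃ u u' v v', u ≠ u' ∧ v ≠ v' ∧
        f u v = f u v' ∧ f u v = f u' v ∧ f u v = f u' v' := by
  obtain ⟨j, rfl⟩ := Nat.exists_eq_add_of_le' hk
  obtain ⟨f, hf⟩ := exists_isLocalStarColoring j
  have no_independent_pair : ∀ u u' v v', u ≠ u' → v ≠ v' → f u v ≠ f u' v' :=
    fun u u' v v' hu hv h => (hf.eq_or_eq_of_color_eq u u' v v' h).elim hu hv
  refine ⟨f, fun u u' v v' hu hv h => (no_independent_pair u u' v v' hu hv h).elim,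
    hf.card_row_le, hf.card_col_le, ?_⟩
  rintro ⟨u, u', v, v', hu, hv, -, -, h⟩
  exact no_independent_pair u u' v v' hu hv h
end

section
/- Let n and p be positive integers. Every shuffle-preserved 2-local coloring of every complete bipartite multigraph on two parts of size n contains a monochromatic copy of K_{p,p} if and only if 2(p−1) < n. -/
/-!
Call a color *large on the left* (right) if at least `p` left (right) vertices carry it.
By shuffle-preservation, the vertices carrying a color `c` span a complete bipartite graph in
color `c`, so it suffices to find a color large on both sides. Since `n > 2(p - 1)`, the at most
two colors at a vertex cannot all be small on the opposite side. If no color were large on both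
sides, pick for each left vertex a color large on the right: these colors are small on the left,
so there are more than `n / p` of them, while their right classes are pairwise disjoint (each
right vertex also carries a color large on the left, leaving room for only one of them), so there
are at most `n / p`. Coloring the edges at `u` by the parity of `u` shows that `n > 2(p - 1)` is
needed.
-/

open Finset Function

lemma Fin.card_le_of_forall_mod_two_eq {n r : ℕ} (A : Finset (Fin n))
    (h : ∀ u ∈ A, (u : ℕ) % 2 = r) : A.card ≤ (n + 1) / 2 := by
  have hmaps : ∀ u ∈ A, (u : ℕ) / 2 ∈ range ((n + 1) / 2) := fun u _ => by
    have := u.isLt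
    rw [mem_range]
    omega
  have hinj : Set.InjOn (fun u : Fin n => (u : ℕ) / 2) A := fun x hx y hy hxy => by
    have := h x hx
    have := h y hy
    simp only at hxy
    exact Fin.ext (by omega)
  simpa using card_le_card_of_injOn _ hmaps hinj

namespace BipartiteColoring

variable {U V C : Type*}

def IsShufflePreserved (η : U → V → Set C) : Prop :=
  ∀ u u' v v' c, c ∈ η u v → c ∈ η u' v' → c ∈ η u v' ∧ c ∈ η u' v

def IsLeftLocal (k : ℕ) (η : U → V → Set C) : Prop :=
  ∀ u, ∃ s : Finset C, s.card ≤ k ∧ ∀ c v, c ∈ η u v → c ∈ s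

def HasMonochromaticBiclique (η : U → V → Set C) (p : ℕ) : Prop :=
  ∃ (c : C) (A : Finset U) (B : Finset V), A.card = p ∧ B.card = p ∧
    ∀ u ∈ A, ∀ v ∈ B, c ∈ η u v

variable [Fintype U] [Fintype V]

open Classical in
noncomputable def leftClass (η : U → V → Set C) (c : C) : Finset U := {u | ∃ v, c ∈ η u v}

noncomputable def rightClass (η : U → V → Set C) (c : C) : Finset V := leftClass (swap η) c

variable {η : U → V → Set C} {u : U} {v : V} {c : C}

@[simp]
lemma mem_leftClass : u ∈ leftClass η c ↔ ∃ v, c ∈ η u v := by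
  simp [leftClass]

@[simp]
lemma mem_rightClass : v ∈ rightClass η c ↔ ∃ u, c ∈ η u v :=
  mem_leftClass

lemma IsShufflePreserved.mem_of_mem_leftClass_of_mem_rightClass (h : IsShufflePreserved η)
    (hu : u ∈ leftClass η c) (hv : v ∈ rightClass η c) : c ∈ η u v := by
  obtain ⟨v₀, hv₀⟩ := mem_leftClass.mp hu
  obtain ⟨u₀, hu₀⟩ := mem_rightClass.mp hv
  exact (h u u₀ v₀ v c hv₀ hu₀).1

lemma IsShufflePreserved.hasMonochromaticBiclique (h : IsShufflePreserved η) {p : ℕ}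
    (hU : p ≤ (leftClass η c).card) (hV : p ≤ (rightClass η c).card) :
    HasMonochromaticBiclique η p := by
  obtain ⟨A, hA, hAcard⟩ := exists_subset_card_eq hU
  obtain ⟨B, hB, hBcard⟩ := exists_subset_card_eq hV
  exact ⟨c, A, B, hAcard, hBcard, fun u hu v hv =>
    h.mem_of_mem_leftClass_of_mem_rightClass (hA hu) (hB hv)⟩

lemma exists_mem_leftClass_lt_card_rightClass (hne : ∀ v, (η u v).Nonempty) {s : Finset C}
    (hs : ∀ c v, c ∈ η u v → c ∈ s) {m : ℕ} (hm : s.card * m < Fintype.card V) :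
    ∃ c, u ∈ leftClass η c ∧ m < (rightClass η c).card := by
  classical
  choose col hcol using hne
  obtain ⟨c, -, hc⟩ := exists_lt_card_fiber_of_mul_lt_card_of_maps_to
    (s := univ) (fun v _ => hs _ v (hcol v)) hm
  have hsub : ({v ∈ univ | col v = c} : Finset V) ⊆ rightClass η c := fun v hv =>
    mem_rightClass.mpr ⟨u, (mem_filter.mp hv).2 ▸ hcol v⟩
  obtain ⟨v, hv⟩ := card_pos.mp (m.zero_le.trans_lt hc)
  exact ⟨c, mem_leftClass.mpr ⟨v, (mem_filter.mp hv).2 ▸ hcol v⟩,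
    hc.trans_le (card_le_card hsub)⟩

variable {p : ℕ}

lemma pairwiseDisjoint_rightClass (hV : IsLeftLocal 2 (swap η))
    (hright : ∀ v, ∃ c, v ∈ rightClass η c ∧ p ≤ (leftClass η c).card)
    (hno : ∀ c, ¬(p ≤ (leftClass η c).card ∧ p ≤ (rightClass η c).card)) :
    {c | p ≤ (rightClass η c).card}.PairwiseDisjoint (rightClass η) := by
  intro c hc c' hc' hcc'
  refine disjoint_left.mpr fun v hv hv' => ?_
  obtain ⟨d, hvd, hd⟩ := hright v
  obtain ⟨s, hs, hmem⟩ := hV v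
  have mem_of_mem_rightClass (e : C) (he : v ∈ rightClass η e) : e ∈ s := by
    obtain ⟨u, hu⟩ := mem_rightClass.mp he
    exact hmem e u hu
  have hdc : c ≠ d := by rintro rfl; exact hno c ⟨hd, hc⟩
  have hdc' : c' ≠ d := by rintro rfl; exact hno c' ⟨hd, hc'⟩
  exact hs.not_gt <| two_lt_card.mpr ⟨c, mem_of_mem_rightClass c hv, c',
    mem_of_mem_rightClass c' hv', d, mem_of_mem_rightClass d hvd, hcc', hdc, hdc'⟩

lemma card_lt_card_of_forall_not_large_both_sides [Nonempty U] (hV : IsLeftLocal 2 (swap η))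
    (hleft : ∀ u, ∃ c, u ∈ leftClass η c ∧ p ≤ (rightClass η c).card)
    (hright : ∀ v, ∃ c, v ∈ rightClass η c ∧ p ≤ (leftClass η c).card)
    (hno : ∀ c, ¬(p ≤ (leftClass η c).card ∧ p ≤ (rightClass η c).card)) :
    Fintype.card U < Fintype.card V := by
  classical
  choose f hfU hfV using hleft
  set S := univ.image f
  have hS_large (c : C) (hc : c ∈ S) : p ≤ (rightClass η c).card := by
    obtain ⟨u, -, rfl⟩ := mem_image.mp hc
    exact hfV u
  have hS_small (c : C) (hc : c ∈ S) : (leftClass η c).card < p :=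
    lt_of_not_ge fun h => hno c ⟨h, hS_large c hc⟩
  have hUS : Fintype.card U ≤ (p - 1) * S.card := by
    refine card_univ (α := U) ▸ card_le_mul_card_image univ (p - 1) fun c hc => ?_
    have hsub : ({u ∈ univ | f u = c} : Finset U) ⊆ leftClass η c := fun u hu =>
      (mem_filter.mp hu).2 ▸ hfU u
    have := card_le_card hsub
    have := hS_small c hc
    omega
  have hSV : S.card * p ≤ Fintype.card V :=
    calc S.card * p = S.card • p := rfl
    _ ≤ ∑ c ∈ S, (rightClass η c).card := card_nsmul_le_sum _ _ _ hS_large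
    _ = (S.biUnion (rightClass η)).card :=
      (card_biUnion ((pairwiseDisjoint_rightClass hV hright hno).subset hS_large)).symm
    _ ≤ Fintype.card V := card_le_univ _
  obtain ⟨u₀⟩ := ‹Nonempty U›
  have hp : 0 < p := (Nat.zero_le _).trans_lt (hS_small _ (mem_image_of_mem f (mem_univ u₀)))
  have hS : 0 < S.card := card_pos.mpr ⟨f u₀, mem_image_of_mem f (mem_univ u₀)⟩
  calc Fintype.card U ≤ (p - 1) * S.card := hUS
  _ < p * S.card := Nat.mul_lt_mul_of_pos_right (by omega) hS
  _ = S.card * p := mul_comm _ _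
  _ ≤ Fintype.card V := hSV

theorem hasMonochromaticBiclique_of_isLeftLocal_two (hne : ∀ u v, (η u v).Nonempty)
    (hsh : IsShufflePreserved η) (hU : IsLeftLocal 2 η) (hV : IsLeftLocal 2 (swap η))
    (hcardU : 2 * (p - 1) < Fintype.card U) (hcardV : 2 * (p - 1) < Fintype.card V) :
    HasMonochromaticBiclique η p := by
  have hleft (u : U) : ∃ c, u ∈ leftClass η c ∧ p ≤ (rightClass η c).card := by
    obtain ⟨s, hs, hmem⟩ := hU u
    obtain ⟨c, hu, hc⟩ := exists_mem_leftClass_lt_card_rightClass (hne u) hmem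
      (m := p - 1) ((Nat.mul_le_mul_right _ hs).trans_lt hcardV)
    exact ⟨c, hu, by omega⟩
  have hright (v : V) : ∃ c, v ∈ rightClass η c ∧ p ≤ (leftClass η c).card := by
    obtain ⟨s, hs, hmem⟩ := hV v
    obtain ⟨c, hv, hc⟩ : ∃ c, v ∈ rightClass η c ∧ p - 1 < (leftClass η c).card :=
      exists_mem_leftClass_lt_card_rightClass (fun u => hne u v) hmem (m := p - 1)
        ((Nat.mul_le_mul_right _ hs).trans_lt hcardU)
    exact ⟨c, hv, by omega⟩
  by_cases hex : ∃ c, p ≤ (leftClass η c).card ∧ p ≤ (rightClass η c).card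
  · obtain ⟨c, hcU, hcV⟩ := hex
    exact hsh.hasMonochromaticBiclique hcU hcV
  · have hno := not_exists.mp hex
    have : Nonempty U := Fintype.card_pos_iff.mp (by omega)
    have : Nonempty V := Fintype.card_pos_iff.mp (by omega)
    exact absurd (card_lt_card_of_forall_not_large_both_sides hV hleft hright hno)
      (card_lt_card_of_forall_not_large_both_sides hU hright hleft fun c h => hno c h.symm).not_gt

end BipartiteColoring

open BipartiteColoring

theorem ramsey_two_local_iff_general (n p : ℕ) (hp : 0 < p) :
    (∀ (U V C : Type) [Fintype U] [Fintype V],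
      Fintype.card U = n → Fintype.card V = n →
      ∀ η : U → V → Set C,
        (∀ u v, (η u v).Nonempty) →
        (∀ u u' v v' c, c ∈ η u v → c ∈ η u' v' →
          c ∈ η u v' ∧ c ∈ η u' v) →
        (∀ u : U, ∃ s : Finset C, s.card ≤ 2 ∧ ∀ c v, c ∈ η u v → c ∈ s) →
        (∀ v : V, ∃ s : Finset C, s.card ≤ 2 ∧ ∀ c u, c ∈ η u v → c ∈ s) →
        ∃ (c : C) (A : Finset U) (B : Finset V), A.card = p ∧ B.card = p ∧
          ∀ u ∈ A, ∀ v ∈ B, c ∈ η u v)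
    ↔ 2 * (p - 1) < n := by
  refine ⟨fun H => ?_, fun hn U V C _ _ hU hV η hne hsh hlocU hlocV =>
    hasMonochromaticBiclique_of_isLeftLocal_two hne hsh hlocU hlocV (hU ▸ hn) (hV ▸ hn)⟩
  obtain ⟨c, A, B, hA, hB, hmem⟩ := H (Fin n) (Fin n) ℕ
    (Fintype.card_fin n) (Fintype.card_fin n) (fun u _ => {(u : ℕ) % 2})
    (fun _ _ => Set.singleton_nonempty _) (fun _ _ _ _ _ h h' => ⟨h, h'⟩)
    (fun u => ⟨{(u : ℕ) % 2}, by simp, fun _ _ hc => by simpa using hc⟩)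
    (fun _ => ⟨{0, 1}, card_le_two, fun c u hc => by
      simp only [Set.mem_singleton_iff] at hc
      simp only [mem_insert, mem_singleton]
      omega⟩)
  obtain ⟨v, hv⟩ := card_pos.mp (hB ▸ hp)
  have := Fin.card_le_of_forall_mod_two_eq A fun u hu =>
    (Set.mem_singleton_iff.mp (hmem u hu v hv)).symm
  omega

/-- Tightness for m = 2: every shuffle-preserved 2-local coloring of every
complete n×n bipartite multigraph has a monochromatic K_{p,p} iff 2(p-1) < n. -/
theorem ramsey_two_local_iff (n p : ℕ) (hn : 0 < n) (hp : 0 < p) :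
    (∀ (U V C : Type) [Fintype U] [Fintype V],
      Fintype.card U = n → Fintype.card V = n →
      ∀ η : U → V → Set C,
        (∀ u v, (η u v).Nonempty) →
        (∀ u u' v v' c, c ∈ η u v → c ∈ η u' v' →
          c ∈ η u v' ∧ c ∈ η u' v) →
        (∀ u : U, ∃ s : Finset C, s.card ≤ 2 ∧ ∀ c v, c ∈ η u v → c ∈ s) →
        (∀ v : V, ∃ s : Finset C, s.card ≤ 2 ∧ ∀ c u, c ∈ η u v → c ∈ s) →
        ∃ (c : C) (A : Finset U) (B : Finset V), A.card = p ∧ B.card = p ∧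
          ∀ u ∈ A, ∀ v ∈ B, c ∈ η u v)
    ↔ 2 * (p - 1) < n :=
  ramsey_two_local_iff_general n p hp
end

section
/- Let k ≥ 2 and let G be a complete k-partite multigraph with parts S_1, …, S_k each of size n, with a shuffle-preserved edge coloring using at most 2 colors in total. If 2(p−1) < n, then there exist p-element subsets A_i ⊆ S_i for each i and a single color c such that every edge between A_i and A_j (i ≠ j) has color c (a monochromatic complete p×p×⋯×p k-partite subgraph). -/
/-!
By shuffle-preservation, each color `c` spans a complete multipartite graph on the vertices
incident to an edge of color `c`. Every vertex sees one of the two colors `a, b`, so in each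
part one of the two color classes has at least `p` vertices. If some part has fewer than `p`
`a`-vertices and some part fewer than `p` `b`-vertices, these parts differ, and the edge between
a non-`a` vertex of the first and a non-`b` vertex of the second has no possible color. Hence a
single color has `p` vertices in every part.
-/

open Finset

theorem Finset.exists_subset_pair_of_card_le_two {α : Type*} [DecidableEq α] [Nonempty α]
    {s : Finset α} (hs : #s ≤ 2) : ∃ a b, s ⊆ {a, b} := by
  obtain rfl | ⟨a, ha⟩ := s.eq_empty_or_nonempty
  · inhabit α
    exact ⟨default, default, empty_subset _⟩
  obtain ⟨b, hb⟩ := card_le_one_iff_subset_singleton.mp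
    (by rw [card_erase_of_mem ha]; omega : #(s.erase a) ≤ 1)
  exact ⟨a, b, (insert_erase ha).symm.subset.trans (insert_subset_insert a hb)⟩

namespace KPartite

variable {ι α C : Type*} (η : ι × α → ι × α → Set C)

def colorsAt (u : ι × α) : Set C :=
  {c | ∃ w, w.1 ≠ u.1 ∧ c ∈ η u w}

open Classical in
noncomputable def colorClass [Fintype α] (c : C) (i : ι) : Finset α :=
  {x | c ∈ colorsAt η (i, x)}

variable {η}

theorem mem_colorClass [Fintype α] {c : C} {i : ι} {x : α} :
    x ∈ colorClass η c i ↔ c ∈ colorsAt η (i, x) := by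
  simp [colorClass]

theorem mem_colorsAt_of_mem {u v : ι × α} {c : C} (huv : u.1 ≠ v.1) (hc : c ∈ η u v) :
    c ∈ colorsAt η u :=
  ⟨v, huv.symm, hc⟩

theorem colorsAt_nonempty [Nontrivial ι] [Nonempty α]
    (hne : ∀ u v : ι × α, u.1 ≠ v.1 → (η u v).Nonempty) (u : ι × α) :
    (colorsAt η u).Nonempty := by
  obtain ⟨i, hi⟩ := exists_ne u.1
  obtain ⟨c, hc⟩ := hne u (i, Classical.arbitrary α) hi.symm
  exact ⟨c, mem_colorsAt_of_mem hi.symm hc⟩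

section TwoColors

variable [Fintype α] {a b : C}

theorem card_le_card_colorClass_add [Nontrivial ι] (hpair : ∀ u, colorsAt η u ⊆ {a, b})
    (hne : ∀ u v : ι × α, u.1 ≠ v.1 → (η u v).Nonempty) (i : ι) :
    Fintype.card α ≤ #(colorClass η a i) + #(colorClass η b i) := by
  classical
  cases isEmpty_or_nonempty α
  · simp
  have hcover : (univ : Finset α) ⊆ colorClass η a i ∪ colorClass η b i := by
    intro x _
    obtain ⟨c, hc⟩ := colorsAt_nonempty hne (i, x)
    rcases hpair (i, x) hc with rfl | rfl
    · exact mem_union_left _ (mem_colorClass.2 hc)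
    · exact mem_union_right _ (mem_colorClass.2 hc)
  calc Fintype.card α = #(univ : Finset α) := card_univ.symm
    _ ≤ #(colorClass η a i ∪ colorClass η b i) := card_le_card hcover
    _ ≤ _ := card_union_le _ _

theorem colorClass_eq_univ_or (hpair : ∀ u, colorsAt η u ⊆ {a, b})
    (hsymm : ∀ u v, η u v = η v u)
    (hne : ∀ u v : ι × α, u.1 ≠ v.1 → (η u v).Nonempty) {i j : ι} (hij : i ≠ j) :
    colorClass η a i = univ ∨ colorClass η b j = univ := by
  simp only [or_iff_not_imp_left, eq_univ_iff_forall, not_forall]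
  rintro ⟨x, hx⟩ y
  by_contra hy
  obtain ⟨c, hc⟩ := hne (i, x) (j, y) hij
  have hcx : c ∈ colorsAt η (i, x) := mem_colorsAt_of_mem hij hc
  have hcy : c ∈ colorsAt η (j, y) := mem_colorsAt_of_mem hij.symm (hsymm (i, x) (j, y) ▸ hc)
  rcases hpair (i, x) hcx with rfl | rfl
  · exact hx (mem_colorClass.2 hcx)
  · exact hy (mem_colorClass.2 hcy)

theorem exists_forall_le_card_colorClass [Nontrivial ι] (hpair : ∀ u, colorsAt η u ⊆ {a, b})
    (hsymm : ∀ u v, η u v = η v u)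
    (hne : ∀ u v : ι × α, u.1 ≠ v.1 → (η u v).Nonempty) {p : ℕ}
    (hlt : 2 * (p - 1) < Fintype.card α) : ∃ c, ∀ i, p ≤ #(colorClass η c i) := by
  by_contra! h
  obtain ⟨i, hi⟩ := h a
  obtain ⟨j, hj⟩ := h b
  obtain rfl | hij := eq_or_ne i j
  · have := card_le_card_colorClass_add hpair hne i
    omega
  rcases colorClass_eq_univ_or hpair hsymm hne hij with h | h
  · rw [h, card_univ] at hi
    omega
  · rw [h, card_univ] at hj
    omega

end TwoColors

end KPartite

open KPartite in
theorem ramsey_kpartite_general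
    {C : Type*} (k n p : ℕ) (hk : 2 ≤ k)
    (η : (Fin k × Fin n) → (Fin k × Fin n) → Set C)
    (hsymm : ∀ u v, η u v = η v u)
    (hne : ∀ u v, u.1 ≠ v.1 → (η u v).Nonempty)
    (hcolors : ∃ s : Finset C, s.card ≤ 2 ∧ ∀ u v c, c ∈ η u v → c ∈ s)
    (hshuffle : ∀ (c : C) u v, (∃ w, w.1 ≠ u.1 ∧ c ∈ η u w) →
      (∃ w, w.1 ≠ v.1 ∧ c ∈ η v w) → u.1 ≠ v.1 → c ∈ η u v)
    (hlt : 2 * (p - 1) < n) :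
    ∃ (c : C) (A : Fin k → Finset (Fin n)),
      (∀ i, (A i).card = p) ∧
      ∀ i j, i ≠ j → ∀ a ∈ A i, ∀ b ∈ A j, c ∈ η (i, a) (j, b) := by
  have : Nontrivial (Fin k) := Fin.nontrivial_iff_two_le.mpr hk
  have : NeZero n := ⟨by omega⟩
  have : Nonempty C := ⟨(colorsAt_nonempty hne (Classical.arbitrary _)).some⟩
  classical
  obtain ⟨s, hs, hsmem⟩ := hcolors
  obtain ⟨a, b, hab⟩ := exists_subset_pair_of_card_le_two hs
  have hpair : ∀ u, colorsAt η u ⊆ {a, b} := fun u c ⟨w, _, hc⟩ => by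
    simpa using hab (hsmem u w c hc)
  obtain ⟨c, hc⟩ := exists_forall_le_card_colorClass hpair hsymm hne (by simpa using hlt)
  choose A hAc hAcard using fun i => exists_subset_card_eq (hc i)
  exact ⟨c, A, hAcard, fun i j hij x hx y hy =>
    hshuffle c (i, x) (j, y) (mem_colorClass.1 (hAc i hx)) (mem_colorClass.1 (hAc j hy)) hij⟩

/-- k-partite generalization: every shuffle-preserved 2-coloring of a
complete n×⋯×n k-partite multigraph contains a monochromatic complete
p×⋯×p k-partite subgraph if 2(p-1) < n. -/
theorem ramsey_kpartite
    {C : Type*} (k n p : ℕ) (hk : 2 ≤ k) (hn : 0 < n) (hp : 0 < p)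
    (η : (Fin k × Fin n) → (Fin k × Fin n) → Set C)
    (hsymm : ∀ u v, η u v = η v u)
    (hne : ∀ u v, u.1 ≠ v.1 → (η u v).Nonempty)
    (hcolors : ∃ s : Finset C, s.card ≤ 2 ∧ ∀ u v c, c ∈ η u v → c ∈ s)
    (hshuffle : ∀ (c : C) u v, (∃ w, w.1 ≠ u.1 ∧ c ∈ η u w) →
      (∃ w, w.1 ≠ v.1 ∧ c ∈ η v w) → u.1 ≠ v.1 → c ∈ η u v)
    (hlt : 2 * (p - 1) < n) :
    ∃ (c : C) (A : Fin k → Finset (Fin n)),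
      (∀ i, (A i).card = p) ∧
      ∀ i j, i ≠ j → ∀ a ∈ A i, ∀ b ∈ A j, c ∈ η (i, a) (j, b) :=
  ramsey_kpartite_general k n p hk η hsymm hne hcolors hshuffle hlt
end

section
/- Let k ≥ 2, n, m, p be positive integers with p > ⌈n/m⌉. Then there exists a complete n×n×⋯×n k-partite multigraph with a shuffle-preserved edge coloring using at most m colors, containing no monochromatic complete p×p×⋯×p k-partite subgraph. -/
/-!
Give every vertex `u` a palette `S u` and colour each edge `uv` between distinct parts by
`S u ∩ S v`; then colour class `c` is the complete multipartite graph on `{u | c ∈ S u}`, so the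
colouring is shuffle-preserved. Single out a hub part `i₀`: the `a`-th vertex of the hub gets the
palette `{a % m}`, every other vertex gets all `m` colours. A monochromatic `p × ⋯ × p` subgraph
in colour `c` would need `p` hub vertices with residue `c` modulo `m`, but `Fin n` has at most
`⌈n / m⌉` of them.
-/

open Finset

theorem card_le_of_forall_val_mod_eq {n m r : ℕ} (hm : 0 < m) {A : Finset (Fin n)}
    (hA : ∀ a ∈ A, (a : ℕ) % m = r) : #A ≤ (n + m - 1) / m := by
  have hinj : Set.InjOn (fun a : Fin n => (a : ℕ) / m) A := fun a ha b hb hab =>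
    Fin.ext (Nat.ext_div_modEq hab ((hA a ha).trans (hA b hb).symm))
  have hmaps : Set.MapsTo (fun a : Fin n => (a : ℕ) / m) A (range ((n + m - 1) / m)) := by
    intro a _
    rw [coe_range, Set.mem_Iio]
    calc (a : ℕ) / m < (a : ℕ) / m + 1 := Nat.lt_succ_self _
      _ = ((a : ℕ) + m) / m := (Nat.add_div_right _ hm).symm
      _ ≤ (n + m - 1) / m := Nat.div_le_div_right (by omega)
  simpa using card_le_card_of_injOn _ hmaps hinj

section PaletteColoring

variable {V ι : Type*} [DecidableEq ι] {part : V → ι} {S : V → Set ℕ} {c : ℕ} {u v w w' : V}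

def paletteColoring (part : V → ι) (S : V → Set ℕ) (u v : V) : Set ℕ :=
  if part u = part v then ∅ else S u ∩ S v

theorem mem_paletteColoring :
    c ∈ paletteColoring part S u v ↔ part u ≠ part v ∧ c ∈ S u ∧ c ∈ S v := by
  unfold paletteColoring
  split_ifs with h <;> simp [h]

theorem paletteColoring_comm (part : V → ι) (S : V → Set ℕ) (u v : V) :
    paletteColoring part S u v = paletteColoring part S v u := by
  ext c
  simp only [mem_paletteColoring, ne_comm (a := part u), and_comm (a := c ∈ S u)]

theorem paletteColoring_subset_left : paletteColoring part S u v ⊆ S u :=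
  fun _ hc => (mem_paletteColoring.1 hc).2.1

theorem mem_paletteColoring_of_mem_of_mem (hu : c ∈ paletteColoring part S u w)
    (hv : c ∈ paletteColoring part S v w') (huv : part u ≠ part v) :
    c ∈ paletteColoring part S u v :=
  mem_paletteColoring.2 ⟨huv, paletteColoring_subset_left hu, paletteColoring_subset_left hv⟩

end PaletteColoring

section HubPalette

variable {ι : Type*} [DecidableEq ι] {n m c : ℕ} (i₀ : ι)

def hubPalette (m : ℕ) (u : ι × Fin n) : Set ℕ :=
  if u.1 = i₀ then {(u.2 : ℕ) % m} else Set.Iio m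

theorem hubPalette_subset_Iio (hm : 0 < m) (u : ι × Fin n) : hubPalette i₀ m u ⊆ Set.Iio m := by
  unfold hubPalette
  split_ifs
  · simpa using Nat.mod_lt _ hm
  · exact subset_rfl

theorem paletteColoring_hubPalette_nonempty (hm : 0 < m) {u v : ι × Fin n} (huv : u.1 ≠ v.1) :
    (paletteColoring Prod.fst (hubPalette i₀ m) u v).Nonempty := by
  simp only [paletteColoring, huv, if_false, hubPalette]
  by_cases hu : u.1 = i₀
  · have hv : v.1 ≠ i₀ := hu ▸ huv.symm
    simpa [hu, hv] using Nat.mod_lt _ hm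
  by_cases hv : v.1 = i₀
  · simpa [hu, hv] using Nat.mod_lt _ hm
  · exact ⟨0, by simp [hu, hv, hm]⟩

theorem card_le_of_forall_mem_hubPalette (hm : 0 < m) {A : Finset (Fin n)}
    (hA : ∀ a ∈ A, c ∈ hubPalette i₀ m (i₀, a)) : #A ≤ (n + m - 1) / m :=
  card_le_of_forall_val_mod_eq hm fun a ha => by simpa [hubPalette, eq_comm] using hA a ha

end HubPalette

theorem exists_kpartite_coloring_no_mono_general
    (k n m p : ℕ) (hk : 2 ≤ k) (hm : 0 < m)
    (hgt : (n + m - 1) / m < p) :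
    ∃ η : (Fin k × Fin n) → (Fin k × Fin n) → Set ℕ,
      (∀ u v, η u v = η v u) ∧
      (∀ u v, u.1 ≠ v.1 → (η u v).Nonempty) ∧
      (∃ s : Finset ℕ, s.card ≤ m ∧ ∀ u v c, c ∈ η u v → c ∈ s) ∧
      (∀ (c : ℕ) u v, (∃ w, w.1 ≠ u.1 ∧ c ∈ η u w) →
        (∃ w, w.1 ≠ v.1 ∧ c ∈ η v w) → u.1 ≠ v.1 → c ∈ η u v) ∧
      ¬ ∃ (c : ℕ) (A : Fin k → Finset (Fin n)),
          (∀ i, (A i).card = p) ∧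
          ∀ i j, i ≠ j → ∀ a ∈ A i, ∀ b ∈ A j, c ∈ η (i, a) (j, b) := by
  let hub : Fin k := ⟨0, by omega⟩
  let other : Fin k := ⟨1, by omega⟩
  refine ⟨paletteColoring Prod.fst (hubPalette hub m), paletteColoring_comm _ _,
    fun u v => paletteColoring_hubPalette_nonempty hub hm,
    ⟨range m, (card_range m).le, fun u v c hc => by
      simpa using hubPalette_subset_Iio hub hm u (paletteColoring_subset_left hc)⟩,
    fun c u v ⟨w, _, hu⟩ ⟨w', _, hv⟩ => mem_paletteColoring_of_mem_of_mem hu hv, ?_⟩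
  rintro ⟨c, A, hcard, hmono⟩
  obtain ⟨b, hb⟩ : (A other).Nonempty := card_pos.1 (hcard other ▸ (Nat.zero_le _).trans_lt hgt)
  have hhub : ∀ a ∈ A hub, c ∈ hubPalette hub m (hub, a) := fun a ha =>
    paletteColoring_subset_left (hmono hub other (by simp [hub, other, Fin.ext_iff]) a ha b hb)
  exact (hcard hub ▸ card_le_of_forall_mem_hubPalette hub hm hhub).not_gt hgt

/-- If p > ⌈n/m⌉, there is a shuffle-preserved m-coloring of a complete
n×⋯×n k-partite multigraph with no monochromatic complete p×⋯×p k-partite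
subgraph. -/
theorem exists_kpartite_coloring_no_mono
    (k n m p : ℕ) (hk : 2 ≤ k) (hn : 0 < n) (hm : 0 < m) (hp : 0 < p)
    (hgt : (n + m - 1) / m < p) :
    ∃ η : (Fin k × Fin n) → (Fin k × Fin n) → Set ℕ,
      (∀ u v, η u v = η v u) ∧
      (∀ u v, u.1 ≠ v.1 → (η u v).Nonempty) ∧
      (∃ s : Finset ℕ, s.card ≤ m ∧ ∀ u v c, c ∈ η u v → c ∈ s) ∧
      (∀ (c : ℕ) u v, (∃ w, w.1 ≠ u.1 ∧ c ∈ η u w) →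
        (∃ w, w.1 ≠ v.1 ∧ c ∈ η v w) → u.1 ≠ v.1 → c ∈ η u v) ∧
      ¬ ∃ (c : ℕ) (A : Fin k → Finset (Fin n)),
          (∀ i, (A i).card = p) ∧
          ∀ i j, i ≠ j → ∀ a ∈ A i, ∀ b ∈ A j, c ∈ η (i, a) (j, b) :=
  exists_kpartite_coloring_no_mono_general k n m p hk hm hgt
end

section
/- Let k ≥ 2, and let n, p be positive integers. Every shuffle-preserved 2-coloring of every complete n×n×⋯×n k-partite multigraph contains a monochromatic complete p×p×⋯×p k-partite subgraph if and only if 2(p−1) < n. -/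
/-!
A 2-coloring is shuffle-preserved exactly when each color `c` is the complete multipartite graph
on the set of vertices incident to `c`, so a monochromatic `p × ⋯ × p` block in color `c` amounts
to `p` vertices incident to `c` in every part.

If `2(p - 1) < n`, pick a color `c₁`. Either it already meets every part in `p` vertices, or some
vertex `u` misses it; then every edge at `u` has the other color `c₂`, so `c₂` is incident to all
vertices outside the part of `u`, and inside that part it misses at most the `p - 1` vertices
incident to `c₁` only.

If `n ≤ 2(p - 1)`, split one part into two sets of size at most `p - 1`, color the edges at the
first set `true` and those at the second set `false`, and all other edges with both colors.
-/

open Finset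

lemma Finset.exists_eq_or_eq_of_card_le_two {α : Type*} {s : Finset α} {a : α}
    (hs : #s ≤ 2) (ha : a ∈ s) : ∃ b, ∀ x ∈ s, x = a ∨ x = b := by
  classical
  have hle : #(s.erase a) ≤ 1 := by rw [card_erase_of_mem ha]; omega
  rcases (s.erase a).eq_empty_or_nonempty with hempty | ⟨b, hb⟩
  · refine ⟨a, fun x hx => .inl ?_⟩
    by_contra hxa
    simpa [hempty] using mem_erase.2 ⟨hxa, hx⟩
  · exact ⟨b, fun x hx => or_iff_not_imp_left.2 fun hxa =>
      card_le_one_iff.1 hle (mem_erase.2 ⟨hxa, hx⟩) hb⟩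

lemma Finset.exists_card_le_and_card_compl_le {α : Type*} [Fintype α] [DecidableEq α] {m : ℕ}
    (h : Fintype.card α ≤ 2 * m) : ∃ T : Finset α, #T ≤ m ∧ #Tᶜ ≤ m := by
  obtain ⟨T, -, hT⟩ := exists_subset_card_eq (s := (univ : Finset α))
    (min_le_right m (Fintype.card α))
  refine ⟨T, hT ▸ min_le_left _ _, ?_⟩
  rw [card_compl, hT]
  omega

namespace MultipartiteColoring

variable {ι α C : Type*}

/-- An edge coloring of the complete multipartite multigraph on `ι × α` with parts `{i} × α`,
given by the set of colors of each pair of vertices. -/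
abbrev Coloring (ι α C : Type*) := ι × α → ι × α → Set C

def Incident (η : Coloring ι α C) (c : C) (u : ι × α) : Prop :=
  ∃ w, w.1 ≠ u.1 ∧ c ∈ η u w

def IsComplete (η : Coloring ι α C) : Prop :=
  ∀ u v, u.1 ≠ v.1 → (η u v).Nonempty

def IsShufflePreserved (η : Coloring ι α C) : Prop :=
  ∀ c u v, Incident η c u → Incident η c v → u.1 ≠ v.1 → c ∈ η u v

def HasMonochromaticBlock (η : Coloring ι α C) (p : ℕ) : Prop :=
  ∃ (c : C) (A : ι → Finset α), (∀ i, #(A i) = p) ∧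
    ∀ i j, i ≠ j → ∀ a ∈ A i, ∀ b ∈ A j, c ∈ η (i, a) (j, b)

open scoped Classical in
noncomputable def incidentFinset [Fintype α] (η : Coloring ι α C) (c : C) (i : ι) : Finset α :=
  {a | Incident η c (i, a)}

lemma mem_incidentFinset [Fintype α] {η : Coloring ι α C} {c : C} {i : ι} {a : α} :
    a ∈ incidentFinset η c i ↔ Incident η c (i, a) := by
  simp [incidentFinset]

section TwoColors

variable {η : Coloring ι α C} {c₁ c₂ : C}

lemma incident_or_incident [Nontrivial ι] [Nonempty α] (hcomplete : IsComplete η)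
    (hcol : ∀ u v c, c ∈ η u v → c = c₁ ∨ c = c₂) (u : ι × α) :
    Incident η c₁ u ∨ Incident η c₂ u := by
  obtain ⟨j, hj⟩ := exists_ne u.1
  obtain ⟨c, hc⟩ := hcomplete u (j, Classical.arbitrary α) hj.symm
  rcases hcol _ _ c hc with rfl | rfl
  exacts [.inl ⟨_, hj, hc⟩, .inr ⟨_, hj, hc⟩]

lemma incident_of_not_incident (hsymm : ∀ u v, η u v = η v u) (hcomplete : IsComplete η)
    (hcol : ∀ u v c, c ∈ η u v → c = c₁ ∨ c = c₂) {u v : ι × α}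
    (hu : ¬ Incident η c₁ u) (hv : v.1 ≠ u.1) : Incident η c₂ v := by
  obtain ⟨c, hc⟩ := hcomplete u v hv.symm
  rcases hcol _ _ c hc with rfl | rfl
  · exact absurd ⟨v, hv, hc⟩ hu
  · exact ⟨u, hv.symm, hsymm u v ▸ hc⟩

lemma card_le_card_incidentFinset_add [Fintype α] [Nontrivial ι] [Nonempty α]
    (hcomplete : IsComplete η) (hcol : ∀ u v c, c ∈ η u v → c = c₁ ∨ c = c₂) (i : ι) :
    Fintype.card α ≤ #(incidentFinset η c₁ i) + #(incidentFinset η c₂ i) := by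
  classical
  calc Fintype.card α = #(univ : Finset α) := card_univ.symm
    _ ≤ #(incidentFinset η c₁ i ∪ incidentFinset η c₂ i) := card_le_card fun a _ => by
        simpa [mem_incidentFinset] using incident_or_incident hcomplete hcol (i, a)
    _ ≤ _ := card_union_le _ _

lemma exists_forall_le_card_incidentFinset [Fintype α] [Nontrivial ι] {p : ℕ}
    (hsymm : ∀ u v, η u v = η v u) (hcomplete : IsComplete η)
    (hcol : ∀ u v c, c ∈ η u v → c = c₁ ∨ c = c₂) (hp : 2 * (p - 1) < Fintype.card α) :
    ∃ c, ∀ i, p ≤ #(incidentFinset η c i) := by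
  have : Nonempty α := Fintype.card_pos_iff.1 (by omega)
  by_cases h₁ : ∀ i, p ≤ #(incidentFinset η c₁ i)
  · exact ⟨c₁, h₁⟩
  obtain ⟨i, hi⟩ := not_forall.1 h₁
  obtain ⟨a, -, ha⟩ := exists_mem_notMem_of_card_lt_card
    (s := incidentFinset η c₁ i) (t := univ) (by rw [card_univ]; omega)
  rw [mem_incidentFinset] at ha
  refine ⟨c₂, fun j => ?_⟩
  rcases eq_or_ne j i with rfl | hj
  · have := card_le_card_incidentFinset_add hcomplete hcol j
    omega
  · have hall : incidentFinset η c₂ j = univ := eq_univ_of_forall fun b =>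
      mem_incidentFinset.2 (incident_of_not_incident hsymm hcomplete hcol ha hj)
    rw [hall, card_univ]
    omega

end TwoColors

variable {η : Coloring ι α C}

lemma IsShufflePreserved.hasMonochromaticBlock [Fintype α] (hshuf : IsShufflePreserved η)
    {c : C} {p : ℕ} (hc : ∀ i, p ≤ #(incidentFinset η c i)) : HasMonochromaticBlock η p := by
  choose A hAsub hAcard using fun i => exists_subset_card_eq (hc i)
  refine ⟨c, A, hAcard, fun i j hij a ha b hb => hshuf c (i, a) (j, b) ?_ ?_ hij⟩
  · exact mem_incidentFinset.1 (hAsub i ha)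
  · exact mem_incidentFinset.1 (hAsub j hb)

theorem hasMonochromaticBlock_of_card_le_two [Fintype α] [Nontrivial ι] {p : ℕ}
    (hsymm : ∀ u v, η u v = η v u) (hcomplete : IsComplete η)
    (hcolors : ∃ s : Finset C, #s ≤ 2 ∧ ∀ u v c, c ∈ η u v → c ∈ s)
    (hshuf : IsShufflePreserved η) (hp : 2 * (p - 1) < Fintype.card α) :
    HasMonochromaticBlock η p := by
  obtain ⟨s, hs, hmem⟩ := hcolors
  have : Nonempty α := Fintype.card_pos_iff.1 (by omega)
  obtain ⟨i, j, hij⟩ := exists_pair_ne ι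
  obtain ⟨c₁, hc₁⟩ := hcomplete (i, Classical.arbitrary α) (j, Classical.arbitrary α) hij
  obtain ⟨c₂, hs₂⟩ := exists_eq_or_eq_of_card_le_two hs (hmem _ _ _ hc₁)
  obtain ⟨c, hc⟩ := exists_forall_le_card_incidentFinset hsymm hcomplete
    (fun u v c h => hs₂ c (hmem u v c h)) hp
  exact hshuf.hasMonochromaticBlock hc

def coloringOf (M : C → ι × α → Prop) : Coloring ι α C :=
  fun u v => {c | M c u ∧ M c v}

lemma coloringOf_symm (M : C → ι × α → Prop) (u v : ι × α) :
    coloringOf M u v = coloringOf M v u :=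
  Set.ext fun _ => and_comm

lemma isShufflePreserved_coloringOf (M : C → ι × α → Prop) :
    IsShufflePreserved (coloringOf M) :=
  fun _ _ _ ⟨_, _, hu⟩ ⟨_, _, hv⟩ _ => ⟨hu.1, hv.1⟩

def splitColoring (i₀ : ι) (T : Finset α) : Coloring ι α Bool :=
  coloringOf fun b u => u.1 = i₀ → (b = true ↔ u.2 ∈ T)

lemma isComplete_splitColoring (i₀ : ι) (T : Finset α) : IsComplete (splitColoring i₀ T) := by
  classical
  intro u v huv
  by_cases hu : u.1 = i₀
  · have hv : v.1 ≠ i₀ := hu ▸ huv.symm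
    exact ⟨decide (u.2 ∈ T), fun _ => decide_eq_true_iff, fun h => absurd h hv⟩
  · by_cases hv : v.1 = i₀
    · exact ⟨decide (v.2 ∈ T), fun h => absurd h hu, fun _ => decide_eq_true_iff⟩
    · exact ⟨true, fun h => absurd h hu, fun h => absurd h hv⟩

lemma not_hasMonochromaticBlock_splitColoring [Fintype α] [DecidableEq α] [Nontrivial ι]
    (i₀ : ι) {T : Finset α} {p : ℕ} (hp : 0 < p) (hT : #T ≤ p - 1) (hTc : #Tᶜ ≤ p - 1) :
    ¬ HasMonochromaticBlock (splitColoring i₀ T) p := by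
  rintro ⟨c, A, hcard, hmono⟩
  obtain ⟨i₁, hi₁⟩ := exists_ne i₀
  obtain ⟨b, hb⟩ := card_pos.1 (hcard i₁ ▸ hp : 0 < #(A i₁))
  have hcolor (a) (ha : a ∈ A i₀) : c = true ↔ a ∈ T := (hmono i₀ i₁ hi₁.symm a ha b hb).1 rfl
  have hsub : A i₀ ⊆ if c then T else Tᶜ := by
    intro a ha
    cases c <;> simpa using hcolor a ha
  have := hcard i₀ ▸ card_le_card hsub
  cases c <;> simp only [Bool.false_eq_true, ↓reduceIte] at this <;> omega

end MultipartiteColoring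

open MultipartiteColoring

theorem ramsey_kpartite_iff_general (k n p : ℕ) (hk : 2 ≤ k) (hp : 0 < p) :
    (∀ (C : Type) (η : (Fin k × Fin n) → (Fin k × Fin n) → Set C),
      (∀ u v, η u v = η v u) →
      (∀ u v, u.1 ≠ v.1 → (η u v).Nonempty) →
      (∃ s : Finset C, s.card ≤ 2 ∧ ∀ u v c, c ∈ η u v → c ∈ s) →
      (∀ (c : C) u v, (∃ w, w.1 ≠ u.1 ∧ c ∈ η u w) →
        (∃ w, w.1 ≠ v.1 ∧ c ∈ η v w) → u.1 ≠ v.1 → c ∈ η u v) →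
      ∃ (c : C) (A : Fin k → Finset (Fin n)),
        (∀ i, (A i).card = p) ∧
        ∀ i j, i ≠ j → ∀ a ∈ A i, ∀ b ∈ A j, c ∈ η (i, a) (j, b))
    ↔ 2 * (p - 1) < n := by
  have : Nontrivial (Fin k) := Fin.nontrivial_iff_two_le.2 hk
  constructor
  · intro H
    by_contra! hn
    obtain ⟨T, hT, hTc⟩ := exists_card_le_and_card_compl_le (α := Fin n) (m := p - 1)
      (by simpa using hn)
    let i₀ : Fin k := ⟨0, by omega⟩
    exact not_hasMonochromaticBlock_splitColoring i₀ hp hT hTc <|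
      H Bool (splitColoring i₀ T) (coloringOf_symm _) (isComplete_splitColoring i₀ T)
        ⟨univ, by simp, fun _ _ c _ => mem_univ c⟩ (isShufflePreserved_coloringOf _)
  · intro hpn C η hsymm hcomplete hcolors hshuf
    exact hasMonochromaticBlock_of_card_le_two hsymm hcomplete hcolors hshuf (by simpa using hpn)

/-- Tightness for k-partite graphs: every shuffle-preserved 2-coloring of
every complete n×⋯×n k-partite multigraph has a monochromatic complete
p×⋯×p k-partite subgraph iff 2(p-1) < n. -/
theorem ramsey_kpartite_iff (k n p : ℕ) (hk : 2 ≤ k) (hn : 0 < n) (hp : 0 < p) :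
    (∀ (C : Type) (η : (Fin k × Fin n) → (Fin k × Fin n) → Set C),
      (∀ u v, η u v = η v u) →
      (∀ u v, u.1 ≠ v.1 → (η u v).Nonempty) →
      (∃ s : Finset C, s.card ≤ 2 ∧ ∀ u v c, c ∈ η u v → c ∈ s) →
      (∀ (c : C) u v, (∃ w, w.1 ≠ u.1 ∧ c ∈ η u w) →
        (∃ w, w.1 ≠ v.1 ∧ c ∈ η v w) → u.1 ≠ v.1 → c ∈ η u v) →
      ∃ (c : C) (A : Fin k → Finset (Fin n)),
        (∀ i, (A i).card = p) ∧
        ∀ i j, i ≠ j → ∀ a ∈ A i, ∀ b ∈ A j, c ∈ η (i, a) (j, b))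
    ↔ 2 * (p - 1) < n :=
  ramsey_kpartite_iff_general k n p hk hp
end

section
/- Suppose M is a 2^ℓ × 2^ℓ matrix of natural numbers with maximum entry μ such that (a) every row and column of M contains at most 3·2^{ℓ−2} distinct values, (b) M has no 2×2 constant submatrix (no i ≠ i', j ≠ j' with M(i,j) = M(i,j') = M(i',j) = M(i',j')), and (c) no value appears in two entries forming a non-shuffle-preserved pattern, i.e., whenever M(i,j) = M(i',j') = c with i ≠ i' and j ≠ j', also M(i,j') = M(i',j) = c. Then the 2^{ℓ+1} × 2^{ℓ+1} block matrix M' = [M, μ+M; 2μ+M, 3μ+M] (adding the scalar t·μ to every entry of the corresponding block) satisfies: every row and column of M' contains at most 3·2^{ℓ−1} distinct values, M' has no 2×2 constant submatrix, and M' satisfies the same shuffle-preservation condition (c). -/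
/-!
The four blocks of `[M, μ+M; 2μ+M, 3μ+M]` take values in the pairwise disjoint intervals
`(tμ, (t+1)μ]`, because the entries of `M` lie in `[1, μ]`. Hence two entries of the doubled
matrix are equal exactly when they lie in the same block and the underlying entries of `M` are
equal, so a constant `2 × 2` submatrix or a shuffle violation would already occur inside `M`.
A row or column meets only two blocks, which at most doubles its number of distinct values.
-/

open Finset

lemma mul_add_eq_mul_add_iff {μ k k' a b : ℕ} (ha₀ : 0 < a) (ha : a ≤ μ) (hb₀ : 0 < b)
    (hb : b ≤ μ) : k * μ + a = k' * μ + b ↔ k = k' ∧ a = b := by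
  refine ⟨fun h => ?_, fun ⟨hk, hab⟩ => hk ▸ hab ▸ rfl⟩
  have below {m m' c d : ℕ} (hm : m < m') (hc : c ≤ μ) (hd : 0 < d) : m * μ + c < m' * μ + d :=
    calc m * μ + c ≤ (m + 1) * μ := by rw [add_one_mul]; omega
      _ ≤ m' * μ := Nat.mul_le_mul_right μ hm
      _ < m' * μ + d := by omega
  rcases lt_trichotomy k k' with hk | rfl | hk
  · exact absurd h (below hk ha hb₀).ne
  · exact ⟨rfl, by omega⟩
  · exact absurd h (below hk hb ha₀).ne'

lemma card_image_univ_sum_le {α β γ : Type*} [Fintype α] [Fintype β] [DecidableEq γ]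
    (f : α ⊕ β → γ) :
    #(univ.image f) ≤ #(univ.image (f ∘ Sum.inl)) + #(univ.image (f ∘ Sum.inr)) := by
  have hsplit : univ.image f = univ.image (f ∘ Sum.inl) ∪ univ.image (f ∘ Sum.inr) := by
    ext; simp
  exact hsplit ▸ card_union_le _ _

lemma card_image_univ_const_add {ι : Type*} [Fintype ι] (c : ℕ) (g : ι → ℕ) :
    #(univ.image fun i => c + g i) = #(univ.image g) := by
  rw [show (fun i => c + g i) = (c + ·) ∘ g from rfl, ← image_image]
  exact card_image_of_injective _ (add_right_injective c)

section BlockDouble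

variable {ι κ β : Type*}

def HasConstSquare (M : ι → κ → β) : Prop :=
  ∃ i i' j j', i ≠ i' ∧ j ≠ j' ∧ M i j = M i j' ∧ M i j = M i' j ∧ M i j = M i' j'

def IsShufflePreserving (M : ι → κ → β) : Prop :=
  ∀ i i' j j', i ≠ i' → j ≠ j' → M i j = M i' j' → M i j' = M i j ∧ M i' j = M i j

/-- The block matrix `[M, μ+M; 2μ+M, 3μ+M]`; `Sum.inr` indexes the second block row/column. -/
def blockDouble (M : ι → κ → ℕ) (μ : ℕ) : ι ⊕ ι → κ ⊕ κ → ℕ := fun x y =>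
  (2 * x.isRight.toNat + y.isRight.toNat) * μ + M (Sum.elim id id x) (Sum.elim id id y)

lemma Sum.eq_of_isRight_eq_of_elim_id_eq {α : Type*} {x x' : α ⊕ α} (h : x.isRight = x'.isRight)
    (hx : Sum.elim id id x = Sum.elim id id x') : x = x' := by
  rcases x with x | x <;> rcases x' with x' | x' <;> simp_all

variable {M : ι → κ → ℕ} {μ : ℕ}

lemma blockDouble_eq_blockDouble_iff (hpos : ∀ i j, 1 ≤ M i j) (hle : ∀ i j, M i j ≤ μ)
    {x x' : ι ⊕ ι} {y y' : κ ⊕ κ} :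
    blockDouble M μ x y = blockDouble M μ x' y' ↔ x.isRight = x'.isRight ∧
      y.isRight = y'.isRight ∧
      M (Sum.elim id id x) (Sum.elim id id y) = M (Sum.elim id id x') (Sum.elim id id y') := by
  rw [blockDouble, blockDouble, mul_add_eq_mul_add_iff (hpos _ _) (hle _ _) (hpos _ _) (hle _ _)]
  cases x.isRight <;> cases x'.isRight <;> cases y.isRight <;> cases y'.isRight <;> simp

lemma not_hasConstSquare_blockDouble (hpos : ∀ i j, 1 ≤ M i j) (hle : ∀ i j, M i j ≤ μ)
    (hM : ¬ HasConstSquare M) : ¬ HasConstSquare (blockDouble M μ) := by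
  rintro ⟨x, x', y, y', hx, hy, hxy', hx'y, hx'y'⟩
  rw [blockDouble_eq_blockDouble_iff hpos hle] at hxy' hx'y hx'y'
  exact hM ⟨_, _, _, _, mt (Sum.eq_of_isRight_eq_of_elim_id_eq hx'y.1) hx,
    mt (Sum.eq_of_isRight_eq_of_elim_id_eq hxy'.2.1) hy, hxy'.2.2, hx'y.2.2, hx'y'.2.2⟩

lemma isShufflePreserving_blockDouble (hpos : ∀ i j, 1 ≤ M i j) (hle : ∀ i j, M i j ≤ μ)
    (hM : IsShufflePreserving M) : IsShufflePreserving (blockDouble M μ) := by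
  intro x x' y y' hx hy h
  obtain ⟨hxr, hyr, hval⟩ := (blockDouble_eq_blockDouble_iff hpos hle).1 h
  obtain ⟨hxy', hx'y⟩ := hM _ _ _ _ (mt (Sum.eq_of_isRight_eq_of_elim_id_eq hxr) hx)
    (mt (Sum.eq_of_isRight_eq_of_elim_id_eq hyr) hy) hval
  rw [blockDouble_eq_blockDouble_iff hpos hle, blockDouble_eq_blockDouble_iff hpos hle]
  exact ⟨⟨rfl, hyr.symm, hxy'⟩, ⟨hxr.symm, rfl, hx'y⟩⟩

lemma card_image_blockDouble_row_le [Fintype κ] {b : ℕ} (hrow : ∀ i, #(univ.image (M i)) ≤ b)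
    (x : ι ⊕ ι) : #(univ.image (blockDouble M μ x)) ≤ 2 * b := by
  have hhalf (t : ℕ) : #(univ.image fun j => t + M (Sum.elim id id x) j) ≤ b :=
    (card_image_univ_const_add _ _).trans_le (hrow _)
  calc #(univ.image (blockDouble M μ x))
      ≤ #(univ.image (blockDouble M μ x ∘ Sum.inl))
          + #(univ.image (blockDouble M μ x ∘ Sum.inr)) :=
        card_image_univ_sum_le _
    _ ≤ b + b := add_le_add (hhalf ((2 * x.isRight.toNat + 0) * μ))
        (hhalf ((2 * x.isRight.toNat + 1) * μ))
    _ = 2 * b := (two_mul b).symm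

lemma card_image_blockDouble_col_le [Fintype ι] {b : ℕ}
    (hcol : ∀ j, #(univ.image fun i => M i j) ≤ b) (y : κ ⊕ κ) : #(univ.image fun x => blockDouble M μ x y) ≤ 2 * b := by
  have hhalf (t : ℕ) : #(univ.image fun i => t + M i (Sum.elim id id y)) ≤ b :=
    (card_image_univ_const_add _ _).trans_le (hcol _)
  calc #(univ.image fun x => blockDouble M μ x y)
      ≤ #(univ.image ((blockDouble M μ · y) ∘ Sum.inl))
          + #(univ.image ((blockDouble M μ · y) ∘ Sum.inr)) :=
        card_image_univ_sum_le _
    _ ≤ b + b := add_le_add (hhalf ((2 * 0 + y.isRight.toNat) * μ))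
        (hhalf ((2 * 1 + y.isRight.toNat) * μ))
    _ = 2 * b := (two_mul b).symm

end BlockDouble

theorem block_matrix_step_general
    (ℓ : ℕ) (hℓ : 2 ≤ ℓ)
    (M : Fin (2 ^ ℓ) → Fin (2 ^ ℓ) → ℕ) (μ : ℕ)
    (hpos : ∀ i j, 1 ≤ M i j)
    (hle : ∀ i j, M i j ≤ μ)
    (hrow : ∀ i, (Finset.univ.image (fun j => M i j)).card ≤ 3 * 2 ^ (ℓ - 2))
    (hcol : ∀ j, (Finset.univ.image (fun i => M i j)).card ≤ 3 * 2 ^ (ℓ - 2))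
    (hK22 : ¬ ∃ i i' j j', i ≠ i' ∧ j ≠ j' ∧
      M i j = M i j' ∧ M i j = M i' j ∧ M i j = M i' j')
    (hshuffle : ∀ i i' j j', i ≠ i' → j ≠ j' → M i j = M i' j' →
      M i j' = M i j ∧ M i' j = M i j)
    (M' : (Fin (2 ^ ℓ) ⊕ Fin (2 ^ ℓ)) → (Fin (2 ^ ℓ) ⊕ Fin (2 ^ ℓ)) → ℕ)
    (hM' : ∀ i j,
      M' (Sum.inl i) (Sum.inl j) = M i j ∧
      M' (Sum.inl i) (Sum.inr j) = μ + M i j ∧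
      M' (Sum.inr i) (Sum.inl j) = 2 * μ + M i j ∧
      M' (Sum.inr i) (Sum.inr j) = 3 * μ + M i j) :
    (∀ i, (Finset.univ.image (fun j => M' i j)).card ≤ 3 * 2 ^ (ℓ - 1)) ∧
    (∀ j, (Finset.univ.image (fun i => M' i j)).card ≤ 3 * 2 ^ (ℓ - 1)) ∧
    (¬ ∃ i i' j j', i ≠ i' ∧ j ≠ j' ∧
      M' i j = M' i j' ∧ M' i j = M' i' j ∧ M' i j = M' i' j') ∧
    (∀ i i' j j', i ≠ i' → j ≠ j' → M' i j = M' i' j' →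
      M' i j' = M' i j ∧ M' i' j = M' i j) := by
  obtain rfl : M' = blockDouble M μ := by
    funext x y
    rcases x with i | i <;> rcases y with j | j <;> simp [blockDouble, hM']
  have hbound : 2 * (3 * 2 ^ (ℓ - 2)) = 3 * 2 ^ (ℓ - 1) := by
    obtain ⟨k, rfl⟩ : ∃ k, ℓ = k + 2 := ⟨ℓ - 2, by omega⟩
    rw [show k + 2 - 1 = k + 1 by omega, Nat.add_sub_cancel, pow_succ]
    ring
  exact ⟨fun x => hbound ▸ card_image_blockDouble_row_le hrow x,
    fun y => hbound ▸ card_image_blockDouble_col_le hcol y,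
    not_hasConstSquare_blockDouble hpos hle hK22,
    isShufflePreserving_blockDouble hpos hle hshuffle⟩

/-- Inductive step of the recursive matrix construction: doubling a good
2^ℓ × 2^ℓ matrix via the block construction [M, μ+M; 2μ+M, 3μ+M] preserves
the absence of constant 2×2 submatrices and shuffle-preservation, and at
most doubles the number of distinct values per row/column. -/
theorem block_matrix_step
    (ℓ : ℕ) (hℓ : 2 ≤ ℓ)
    (M : Fin (2 ^ ℓ) → Fin (2 ^ ℓ) → ℕ) (μ : ℕ)
    (hpos : ∀ i j, 1 ≤ M i j)
    (hle : ∀ i j, M i j ≤ μ)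
    (hattained : ∃ i j, M i j = μ)
    (hrow : ∀ i, (Finset.univ.image (fun j => M i j)).card ≤ 3 * 2 ^ (ℓ - 2))
    (hcol : ∀ j, (Finset.univ.image (fun i => M i j)).card ≤ 3 * 2 ^ (ℓ - 2))
    (hK22 : ¬ ∃ i i' j j', i ≠ i' ∧ j ≠ j' ∧
      M i j = M i j' ∧ M i j = M i' j ∧ M i j = M i' j')
    (hshuffle : ∀ i i' j j', i ≠ i' → j ≠ j' → M i j = M i' j' →
      M i j' = M i j ∧ M i' j = M i j)
    (M' : (Fin (2 ^ ℓ) ⊕ Fin (2 ^ ℓ)) → (Fin (2 ^ ℓ) ⊕ Fin (2 ^ ℓ)) → ℕ)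
    (hM' : ∀ i j,
      M' (Sum.inl i) (Sum.inl j) = M i j ∧
      M' (Sum.inl i) (Sum.inr j) = μ + M i j ∧
      M' (Sum.inr i) (Sum.inl j) = 2 * μ + M i j ∧
      M' (Sum.inr i) (Sum.inr j) = 3 * μ + M i j) :
    (∀ i, (Finset.univ.image (fun j => M' i j)).card ≤ 3 * 2 ^ (ℓ - 1)) ∧
    (∀ j, (Finset.univ.image (fun i => M' i j)).card ≤ 3 * 2 ^ (ℓ - 1)) ∧
    (¬ ∃ i i' j j', i ≠ i' ∧ j ≠ j' ∧
      M' i j = M' i j' ∧ M' i j = M' i' j ∧ M' i j = M' i' j') ∧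
    (∀ i i' j j', i ≠ i' → j ≠ j' → M' i j = M' i' j' →
      M' i j' = M' i j ∧ M' i' j = M' i j) :=
  block_matrix_step_general ℓ hℓ M μ hpos hle hrow hcol hK22 hshuffle M' hM'
end
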